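/- For integers u ≥ 2, v ≥ 0, n ≥ 0 and p ≥ 1, one has z_u z_p^v ⋆_t z_p^n = Σ_{i=0}^{n} [ z_p^i z_u + z_p^{i−1} { (1−2t) z_{u+p} + (1 − δ_{v,0} δ_{n,i}) (t²−t) x^{u+p} } ] (z_p^v ⋆_t z_p^{n−i}), with the convention z_p^{−1} = 0 and δ_{i,j} the Kronecker delta. -/

import Mathlib

/- ℍ_t = ℚ[t]⟨x,y⟩, z_k = x^{k-1}y, and the t-stuffle product ⋆_t on the word
basis of ℍ¹_t (a ℚ[t]-bilinear map is determined by its values on words). -/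

noncomputable section

open Polynomial Finset

abbrev R : Type := Polynomial ℚ
abbrev A : Type := FreeAlgebra R Bool

def Xg : A := FreeAlgebra.ι R false
def Yg : A := FreeAlgebra.ι R true
def tp : R := Polynomial.X

/-- `z k = x^(k-1) y`. -/
def z (k : ℕ) : A := Xg ^ (k - 1) * Yg

/-- The word `z_{k₁} ⋯ z_{kₙ}`. -/
def zw (w : List ℕ) : A := (w.map z).prod

/-- The t-stuffle product, given on the word basis of ℍ¹_t. -/
def tst : List ℕ → List ℕ → A
  | [], w => zw w
  | k :: w₁, [] => zw (k :: w₁)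
  | k :: w₁, l :: w₂ =>
      z k * tst w₁ (l :: w₂) + z l * tst (k :: w₁) w₂
        + (1 - 2 * tp) • (z (k + l) * tst w₁ w₂)
        + (if w₁ = [] ∧ w₂ = [] then (0 : R) else tp ^ 2 - tp) • (Xg ^ (k + l) * tst w₁ w₂)
  termination_by w₁ w₂ => w₁.length + w₂.length

lemma tst_nil (w : List ℕ) : tst w [] = zw w := by
  cases w <;> simp [tst]

lemma zw_cons (k : ℕ) (w : List ℕ) : zw (k :: w) = z k * zw w := by
  simp [zw]

/-- for u ≥ 2, v ≥ 0, n ≥ 0, p ≥ 1,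
`z_u z_p^v ⋆_t z_p^n = Σ_{i=0}^n [z_p^i z_u + z_p^{i-1}{(1-2t) z_{u+p}
  + (1-δ_{v,0}δ_{n,i})(t²-t) x^{u+p}}] (z_p^v ⋆_t z_p^{n-i})`,
with the convention `z_p^{-1} = 0`. -/
theorem eq8 (u v n p : ℕ) (hu : 2 ≤ u) (hp : 1 ≤ p) :
    tst (u :: List.replicate v p) (List.replicate n p) =
      ∑ i ∈ Finset.range (n + 1),
        (zw (List.replicate i p) * z u
          + (if i = 0 then (0 : A)
             else zw (List.replicate (i - 1) p) *
               ((1 - 2 * tp) • z (u + p)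
                + (if v = 0 ∧ n = i then (0 : R) else tp ^ 2 - tp) • (Xg ^ (u + p) : A))))
        * tst (List.replicate v p) (List.replicate (n - i) p) := by
  induction n with
  | zero =>
      simp [tst_nil, zw_cons, zw, tst]
  | succ n ih =>
      rw [show List.replicate (n+1) p = p :: List.replicate n p from rfl]
      rw [tst, ih]
      conv_rhs => rw [Finset.sum_range_succ']
      have h0 : (zw (List.replicate 0 p) * z u
          + (if (0:ℕ) = 0 then (0 : A)
             else zw (List.replicate (0 - 1) p) *
               ((1 - 2 * tp) • z (u + p)
                + (if v = 0 ∧ n + 1 = 0 then (0 : R) else tp ^ 2 - tp) • (Xg ^ (u + p) : A))))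
          * tst (List.replicate v p) (List.replicate (n + 1 - 0) p)
          = z u * tst (List.replicate v p) (p :: List.replicate n p) := by
        simp [zw, List.replicate_succ]
      set E : A := ((1 - 2 * tp) • z (u + p)
          + (if v = 0 ∧ n = 0 then (0 : R) else tp ^ 2 - tp) • (Xg ^ (u + p) : A))
          * tst (List.replicate v p) (List.replicate n p) with hE
      have key : ∀ i ∈ Finset.range (n+1),
          (zw (List.replicate (i+1) p) * z u
            + (if i + 1 = 0 then (0 : A)
               else zw (List.replicate (i + 1 - 1) p) *
                 ((1 - 2 * tp) • z (u + p)
                  + (if v = 0 ∧ n + 1 = i + 1 then (0 : R) else tp ^ 2 - tp) • (Xg ^ (u + p) : A))))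
          * tst (List.replicate v p) (List.replicate (n + 1 - (i + 1)) p)
          = z p * ((zw (List.replicate i p) * z u
            + (if i = 0 then (0 : A)
               else zw (List.replicate (i - 1) p) *
                 ((1 - 2 * tp) • z (u + p)
                  + (if v = 0 ∧ n = i then (0 : R) else tp ^ 2 - tp) • (Xg ^ (u + p) : A))))
          * tst (List.replicate v p) (List.replicate (n - i) p))
          + (if i = 0 then E else 0) := by
        intro i _
        have hc : (v = 0 ∧ n + 1 = i + 1) ↔ (v = 0 ∧ n = i) := by omega
        rw [if_congr hc rfl rfl]
        cases i with
        | zero =>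
            simp [zw, hE, add_mul, mul_add, mul_assoc]
        | succ j =>
            simp only [List.replicate_succ (a := p) (n := j+1), List.replicate_succ (a := p) (n := j), zw_cons,
              Nat.add_sub_cancel, Nat.succ_ne_zero, if_false, add_zero]
            simp [mul_add, add_mul, mul_assoc]
      conv_rhs => rw [Finset.sum_congr rfl key, Finset.sum_add_distrib,
        Finset.sum_ite_eq' (Finset.range (n+1)) 0, ← Finset.mul_sum]
      rw [h0]
      simp only [Finset.mem_range, Nat.succ_pos, if_pos, Nat.lt_add_one]
      have hrep : (List.replicate v p = [] ∧ List.replicate n p = []) ↔ (v = 0 ∧ n = 0) := by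
        simp [List.replicate_eq_nil_iff]
      rw [if_congr hrep rfl rfl, hE]
      rw [add_mul, smul_mul_assoc, smul_mul_assoc]
      abel
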